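/- Over ℚ, for every monomial w of length ≥ 1 and every monomial v (possibly empty), the element w·η(w)·v lies in the ℚ-span R of the elements h^l_m(u) − u (for monomials u and 2 ≤ m ≤ len(u)). That is, w·η(w)·v = 0 in the quotient algebra A/R. -/

import Mathlib

noncomputable section

abbrev FA (k : Type*) [Field k] (p : ℕ) := MonoidAlgebra k (FreeMonoid (Fin p))

def mon (k : Type*) [Field k] {p : ℕ} (l : List (Fin p)) : FA k p :=
  MonoidAlgebra.of k (FreeMonoid (Fin p)) (FreeMonoid.ofList l)

def etaRev (k : Type*) [Field k] {p : ℕ} : List (Fin p) → FA k p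
  | [] => 0
  | [a] => mon k [a]
  | a :: b :: l => mon k [a] * etaRev k (b :: l) - etaRev k (b :: l) * mon k [a]

def etaList (k : Type*) [Field k] {p : ℕ} (l : List (Fin p)) : FA k p :=
  etaRev k l.reverse

def etaLin (k : Type*) [Field k] (p : ℕ) : FA k p →ₗ[k] FA k p :=
  Finsupp.lift (FA k p) k (FreeMonoid (Fin p)) (fun w => etaList k (FreeMonoid.toList w)) ∘ₗ
    (MonoidAlgebra.coeffLinearEquiv k).toLinearMap

/-- The fold move `h^l_n` on a monomial (word). -/
def hl (k : Type*) [Field k] {p : ℕ} (n : ℕ) (l : List (Fin p)) : FA k p :=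
  if 2 ≤ n ∧ n ≤ l.length then
    ((-1 : k) ^ (n - 1)) •
      (mon k ((l.drop (n - 1)).take 1) * etaList k (l.take (n - 1)) * mon k (l.drop n))
  else mon k l

def hlLin (k : Type*) [Field k] (p n : ℕ) : FA k p →ₗ[k] FA k p :=
  Finsupp.lift (FA k p) k (FreeMonoid (Fin p)) (fun w => hl k n (FreeMonoid.toList w)) ∘ₗ
    (MonoidAlgebra.coeffLinearEquiv k).toLinearMap

/-- The span of the `H^l` relations `h^l_n(w) - w`. -/
def Rspan (k : Type*) [Field k] (p : ℕ) : Submodule k (FA k p) :=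
  Submodule.span k
    {x | ∃ (l : List (Fin p)) (n : ℕ), 2 ≤ n ∧ n ≤ l.length ∧ x = hl k n l - mon k l}

/-! The relation `h^l_{m+1}(u c z) - u c z` says `u c z ≡ (-1)^|u| c η(u) z` modulo `R`; by
linearity the same holds with `u` replaced by any homogeneous `X` of degree `m ≥ 1`, and `R` is a
right ideal. Since `η(t b) = [b, η(t)]` for nonempty `t`, the Jacobi identity gives
`η(t η(r)) = (-1)^(|r|+1) [η(r), η(t)]`. For `w = u a`, the congruences for `(u, a, η(w) v)`,
`(w, a, η(u) v)` and `(w η(u), a, v)` have right-hand sides that cancel, while their left-hand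
sides combine to `2 w η(w) v`. -/

variable {k : Type*} [Field k] {p : ℕ}

lemma mon_append (l₁ l₂ : List (Fin p)) : mon k (l₁ ++ l₂) = mon k l₁ * mon k l₂ := by
  simp [mon, FreeMonoid.ofList_append]

lemma mon_nil : mon k ([] : List (Fin p)) = 1 := by
  simp [mon, FreeMonoid.ofList_nil, MonoidAlgebra.of_apply, MonoidAlgebra.one_def]

lemma of_eq_mon (g : FreeMonoid (Fin p)) : MonoidAlgebra.of k _ g = mon k g.toList := by
  rw [mon, FreeMonoid.ofList_toList]

lemma etaLin_mon (l : List (Fin p)) : etaLin k p (mon k l) = etaList k l := by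
  simp [etaLin, mon, MonoidAlgebra.of_apply]

lemma etaList_singleton (a : Fin p) : etaList k [a] = mon k [a] := rfl

lemma etaList_append_singleton {u : List (Fin p)} (hu : u ≠ []) (c : Fin p) :
    etaList k (u ++ [c]) = ⁅mon k [c], etaList k u⁆ := by
  obtain ⟨b, l, hbl⟩ := List.exists_cons_of_ne_nil (List.reverse_ne_nil_iff.mpr hu)
  rw [etaList, etaList, List.reverse_append, hbl]
  rfl

lemma hl_append {n : ℕ} {l : List (Fin p)} (hn : 2 ≤ n ∧ n ≤ l.length) (z : List (Fin p)) :
    hl k n (l ++ z) = hl k n l * mon k z := by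
  have hn' : 2 ≤ n ∧ n ≤ (l ++ z).length := ⟨hn.1, by simp; omega⟩
  have hn₁ : n - 1 ≤ l.length := by omega
  simp only [hl, if_pos hn, if_pos hn', List.drop_append_of_le_length hn₁,
    List.take_append_of_le_length hn₁,
    List.drop_append_of_le_length hn.2, mon_append, smul_mul_assoc, mul_assoc]
  rw [List.take_append_of_le_length (by simp; omega)]

lemma hl_append_singleton {u : List (Fin p)} (hu : u ≠ []) (c : Fin p) :
    hl k (u.length + 1) (u ++ [c]) = (-1 : k) ^ u.length • (mon k [c] * etaList k u) := by
  have hlen : 2 ≤ u.length + 1 ∧ u.length + 1 ≤ (u ++ [c]).length :=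
    ⟨by simpa [Nat.one_le_iff_ne_zero] using hu, by simp⟩
  simp [hl, hlen, mon_nil]

lemma mul_mon_mem_Rspan {x : FA k p} (hx : x ∈ Rspan k p) (z : List (Fin p)) :
    x * mon k z ∈ Rspan k p := by
  induction hx using Submodule.span_induction with
  | mem x hx =>
    obtain ⟨l, n, h2, hn, rfl⟩ := hx
    rw [sub_mul, ← hl_append ⟨h2, hn⟩, ← mon_append]
    exact Submodule.subset_span ⟨l ++ z, n, h2, by simp; omega, rfl⟩
  | zero => simp
  | add x y _ _ hx hy => rw [add_mul]; exact add_mem hx hy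
  | smul a x _ hx => rw [smul_mul_assoc]; exact Submodule.smul_mem _ a hx

lemma mul_mem_Rspan {x : FA k p} (hx : x ∈ Rspan k p) (Z : FA k p) : x * Z ∈ Rspan k p := by
  induction Z using MonoidAlgebra.induction_on with
  | of g => rw [of_eq_mon]; exact mul_mon_mem_Rspan hx _
  | add Y Z hY hZ => rw [mul_add]; exact add_mem hY hZ
  | smul a Z hZ => rw [mul_smul_comm]; exact Submodule.smul_mem _ a hZ

variable (k p) in
def homogeneous (m : ℕ) : Submodule k (FA k p) :=
  Submodule.span k {x | ∃ u : List (Fin p), u.length = m ∧ mon k u = x}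

lemma mon_mem_homogeneous (u : List (Fin p)) : mon k u ∈ homogeneous k p u.length :=
  Submodule.subset_span ⟨u, rfl, rfl⟩

lemma mul_mem_homogeneous {m n : ℕ} {X Y : FA k p} (hX : X ∈ homogeneous k p m)
    (hY : Y ∈ homogeneous k p n) : X * Y ∈ homogeneous k p (m + n) := by
  have hXY := Submodule.mul_mem_mul hX hY
  rw [homogeneous, homogeneous, Submodule.span_mul_span] at hXY
  refine Submodule.span_mono ?_ hXY
  rintro _ ⟨_, ⟨u, rfl, rfl⟩, _, ⟨v, rfl, rfl⟩, rfl⟩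
  exact ⟨u ++ v, List.length_append, mon_append u v⟩

lemma etaList_mem_homogeneous (r : List (Fin p)) : etaList k r ∈ homogeneous k p r.length := by
  induction r using List.reverseRecOn with
  | nil => exact zero_mem _
  | append_singleton r a ih =>
    rcases eq_or_ne r [] with rfl | hr
    · exact mon_mem_homogeneous [a]
    rw [etaList_append_singleton hr, Ring.lie_def, List.length_append, List.length_singleton]
    exact sub_mem (add_comm r.length 1 ▸ mul_mem_homogeneous (mon_mem_homogeneous [a]) ih)
      (mul_mem_homogeneous ih (mon_mem_homogeneous [a]))

lemma etaLin_mul_mon_singleton {m : ℕ} (hm : 1 ≤ m) {X : FA k p} (hX : X ∈ homogeneous k p m)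
    (c : Fin p) : etaLin k p (X * mon k [c]) = ⁅mon k [c], etaLin k p X⁆ := by
  induction hX using Submodule.span_induction with
  | mem x hx =>
    obtain ⟨u, rfl, rfl⟩ := hx
    rw [← mon_append, etaLin_mon, etaLin_mon,
      etaList_append_singleton (List.ne_nil_of_length_pos hm)]
  | zero => simp [Ring.lie_def]
  | add x y _ _ hx hy =>
    rw [add_mul, map_add, map_add, hx, hy]
    simp only [Ring.lie_def, mul_add, add_mul]
    abel
  | smul a x _ hx =>
    rw [smul_mul_assoc, map_smul, map_smul, hx]
    simp only [Ring.lie_def, mul_smul_comm, smul_mul_assoc, smul_sub]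

lemma etaLin_mon_mul_etaList {t : List (Fin p)} (ht : t ≠ []) {r : List (Fin p)} (hr : r ≠ []) :
    etaLin k p (mon k t * etaList k r) =
      (-1 : k) ^ (r.length + 1) • ⁅etaList k r, etaList k t⁆ := by
  induction r using List.reverseRecOn generalizing t with
  | nil => exact absurd rfl hr
  | append_singleton r a ih =>
    rcases eq_or_ne r [] with rfl | hr'
    · rw [List.nil_append, etaList_singleton, ← mon_append, etaLin_mon,
        etaList_append_singleton ht]
      simp [Ring.lie_def]
    have hta : t ++ [a] ≠ [] := by simp
    have hmem : mon k t * etaList k r ∈ homogeneous k p (t.length + r.length) :=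
      mul_mem_homogeneous (mon_mem_homogeneous t) (etaList_mem_homogeneous r)
    have hdeg : 1 ≤ t.length + r.length := by
      have := List.length_pos_of_ne_nil ht; omega
    calc etaLin k p (mon k t * etaList k (r ++ [a]))
        = etaLin k p (mon k (t ++ [a]) * etaList k r) -
            etaLin k p (mon k t * etaList k r * mon k [a]) := by
          rw [etaList_append_singleton hr', Ring.lie_def, mul_sub, map_sub, mon_append,
            mul_assoc, mul_assoc]
      _ = (-1 : k) ^ ((r ++ [a]).length + 1) • ⁅etaList k (r ++ [a]), etaList k t⁆ := by
          rw [ih hta hr', etaList_append_singleton ht, etaLin_mul_mon_singleton hdeg hmem,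
            ih ht hr', etaList_append_singleton hr', List.length_append, List.length_singleton,
            pow_succ _ (r.length + 1)]
          simp only [Ring.lie_def, mul_sub, sub_mul, mul_assoc, smul_sub, mul_smul_comm,
            smul_mul_assoc, mul_neg_one, neg_smul]
          abel

lemma mon_append_singleton_sub_mem_Rspan {u : List (Fin p)} (hu : u ≠ []) (c : Fin p) :
    mon k u * mon k [c] - (-1 : k) ^ u.length • (mon k [c] * etaList k u) ∈ Rspan k p := by
  rw [← hl_append_singleton hu, ← mon_append, ← neg_sub]
  refine neg_mem (Submodule.subset_span ⟨u ++ [c], u.length + 1, ?_, by simp, rfl⟩)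
  simpa [Nat.one_le_iff_ne_zero] using hu

lemma mul_mon_singleton_sub_mem_Rspan {m : ℕ} (hm : 1 ≤ m) {X : FA k p}
    (hX : X ∈ homogeneous k p m) (c : Fin p) :
    X * mon k [c] - (-1 : k) ^ m • (mon k [c] * etaLin k p X) ∈ Rspan k p := by
  induction hX using Submodule.span_induction with
  | mem x hx =>
    obtain ⟨u, rfl, rfl⟩ := hx
    rw [etaLin_mon]
    exact mon_append_singleton_sub_mem_Rspan (List.ne_nil_of_length_pos hm) c
  | zero => simp
  | add x y _ _ hx hy =>
    convert add_mem hx hy using 1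
    simp only [add_mul, map_add, mul_add, smul_add]
    abel
  | smul a x _ hx =>
    convert Submodule.smul_mem _ a hx using 1
    simp only [smul_mul_assoc, map_smul, mul_smul_comm, smul_sub, smul_comm a]

lemma two_smul_mon_mul_etaList_mul_mon_mem_Rspan {w : List (Fin p)} (hw : w ≠ [])
    (v : List (Fin p)) : (2 : k) • (mon k w * etaList k w * mon k v) ∈ Rspan k p := by
  obtain ⟨u, a, rfl⟩ : ∃ u a, w = u ++ [a] :=
    ⟨w.dropLast, w.getLast hw, (List.dropLast_append_getLast hw).symm⟩
  rcases eq_or_ne u [] with rfl | hu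
  · convert mul_mem_Rspan (mul_mon_singleton_sub_mem_Rspan le_rfl (mon_mem_homogeneous [a]) a)
      (mon k v) using 1
    rw [List.nil_append, etaLin_mon, etaList_singleton]
    simp only [sub_mul, smul_mul_assoc, mul_assoc]
    module
  have r₁ := mul_mem_Rspan
    (mul_mon_singleton_sub_mem_Rspan (List.length_pos_of_ne_nil hu) (mon_mem_homogeneous u) a)
    (etaList k (u ++ [a]) * mon k v)
  have r₂ := mul_mem_Rspan
    (mul_mon_singleton_sub_mem_Rspan (by simp) (mon_mem_homogeneous (u ++ [a])) a)
    (etaList k u * mon k v)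
  have r₃ := mul_mem_Rspan (mul_mon_singleton_sub_mem_Rspan (by simp; omega)
    (mul_mem_homogeneous (mon_mem_homogeneous (u ++ [a])) (etaList_mem_homogeneous u)) a)
    (mon k v)
  have hodd : (-1 : k) ^ ((u ++ [a]).length + u.length) = -1 :=
    Odd.neg_one_pow ⟨u.length, by simp; ring⟩
  convert sub_mem (add_mem r₁ r₂) r₃ using 1
  rw [hodd, etaLin_mon_mul_etaList (by simp) hu, etaLin_mon, etaLin_mon,
    etaList_append_singleton hu, mon_append, List.length_append, List.length_singleton]
  simp only [Ring.lie_def, pow_succ, mul_sub, sub_mul, mul_assoc, smul_sub,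
    mul_smul_comm, smul_mul_assoc]
  module

/-- The Y relations are trivial: w·η(w)·v ∈ R for every monomial w of length ≥ 1
and every (possibly empty) monomial v, over ℚ. -/
theorem y_trivial {p : ℕ} (w v : List (Fin p)) (hw : 1 ≤ w.length) :
    mon ℚ w * etaList ℚ w * mon ℚ v ∈ Rspan ℚ p :=
  (Submodule.smul_mem_iff _ two_ne_zero).mp
    (two_smul_mon_mul_etaList_mul_mon_mem_Rspan (List.ne_nil_of_length_pos hw) v)
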